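/- Let p₁ = p_{1R} + i p_{1I} ∈ ℂ with p_{1R} > 0 and α₁ ∈ ℂ, α₁ ≠ 0, and let f, g be the one-soliton tau functions f(y,s) = −1 − (|α₁|² |p₁|⁴ / (4 (p₁ + conj(p₁))²)) e^{η₁ + conj(η₁)}, g(y,s) = −α₁ e^{η₁} with η₁(y,s) = p₁ y + s/p₁. Then for each fixed s ∈ ℝ, the supremum over y ∈ ℝ of |g(y,s)/f(y,s)| equals 2 p_{1R}/|p₁|², i.e. the amplitude of the envelope one-soliton is 2 p_{1R}/|p₁|². -/

import Mathlib

open Complex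

/-! Since `η₁ + conj η₁ = 2 Re η₁` and `p₁ + conj p₁ = 2 p_{1R}`, the tau function `f` is real and
negative, and `|g/f| = |α₁| t / (1 + (b t)²)` with `t = exp (Re η₁)` and
`b = |α₁| |p₁|² / (4 p_{1R})`. For fixed `s`, `t` sweeps out `(0, ∞)` as `y` varies, and by AM-GM
`1 + (b t)² ≥ 2 b t` with equality at `t = 1/b`, so the supremum is attained and equals
`|α₁| / (2 b) = 2 p_{1R} / |p₁|²`. -/

theorem isGreatest_image_mul_div_one_add_sq {a b : ℝ} (ha : 0 ≤ a) (hb : 0 < b) :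
    IsGreatest ((fun t => a * t / (1 + (b * t) ^ 2)) '' Set.Ioi 0) (a / (2 * b)) := by
  refine ⟨⟨1 / b, one_div_pos.mpr hb, ?_⟩, ?_⟩
  · field_simp
    ring
  · rintro _ ⟨t, -, rfl⟩
    rw [div_le_div_iff₀ (by positivity) (by positivity)]
    nlinarith [mul_nonneg ha (sq_nonneg (b * t - 1))]

theorem norm_neg_mul_exp_div_neg_one_sub_mul_exp_add_conj (α p η : ℂ) :
    ‖-α * exp η / (-1 - ((‖α‖ : ℂ) ^ 2 * (‖p‖ : ℂ) ^ 4 / (4 * (p + starRingEnd ℂ p) ^ 2))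
        * exp (η + starRingEnd ℂ η))‖
      = ‖α‖ * Real.exp η.re / (1 + (‖α‖ * ‖p‖ ^ 2 / (4 * p.re) * Real.exp η.re) ^ 2) := by
  have hden : -1 - ((‖α‖ : ℂ) ^ 2 * (‖p‖ : ℂ) ^ 4 / (4 * (p + starRingEnd ℂ p) ^ 2))
        * exp (η + starRingEnd ℂ η)
      = ((-(1 + (‖α‖ * ‖p‖ ^ 2 / (4 * p.re) * Real.exp η.re) ^ 2) : ℝ) : ℂ) := by
    rw [add_conj, add_conj, ← ofReal_exp, two_mul η.re, Real.exp_add, ← sq]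
    generalize Real.exp η.re = t
    push_cast
    ring
  rw [norm_div, hden, norm_real, Real.norm_eq_abs, abs_neg, abs_of_pos (by positivity),
    norm_mul, norm_neg, norm_exp]

theorem range_exp_re_mul_ofReal_add {p : ℂ} (hp : p.re ≠ 0) (c : ℂ) :
    Set.range (fun y : ℝ => Real.exp (p * y + c).re) = Set.Ioi 0 := by
  have hsurj : Function.Surjective fun y : ℝ => (p * y + c).re := fun x =>
    ⟨(x - c.re) / p.re, by simp only [add_re, re_mul_ofReal]; field_simp; ring⟩
  rw [← Real.range_exp, Set.range_comp' Real.exp, hsurj.range_eq, Set.image_univ]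

theorem csp_one_soliton_amplitude
    (p1R p1I : ℝ) (hp : 0 < p1R) (α₁ : ℂ) (hα : α₁ ≠ 0)
    (p₁ : ℂ) (hp₁ : p₁ = ⟨p1R, p1I⟩)
    (η₁ : ℝ → ℝ → ℂ) (hη₁ : ∀ y s, η₁ y s = p₁ * (y : ℂ) + (s : ℂ) / p₁)
    (f g : ℝ → ℝ → ℂ)
    (hf : ∀ y s, f y s = -1 -
      ((‖α₁‖ : ℂ)^2 * (‖p₁‖ : ℂ)^4 / (4 * (p₁ + starRingEnd ℂ p₁)^2))
        * Complex.exp (η₁ y s + starRingEnd ℂ (η₁ y s)))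
    (hg : ∀ y s, g y s = -α₁ * Complex.exp (η₁ y s)) :
    ∀ s, IsLUB (Set.range fun y => ‖g y s / f y s‖)
      (2 * p1R / (p1R^2 + p1I^2)) := by
  intro s
  have hre : p₁.re = p1R := by rw [hp₁]
  have hnorm : ‖p₁‖ ^ 2 = p1R ^ 2 + p1I ^ 2 := by
    rw [Complex.sq_norm, normSq_apply, hp₁]
    ring
  have hb : 0 < ‖α₁‖ * (p1R ^ 2 + p1I ^ 2) / (4 * p1R) := by
    have := norm_pos_iff.mpr hα
    positivity
  have hratio : (fun y => ‖g y s / f y s‖)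
      = (fun t => ‖α₁‖ * t / (1 + (‖α₁‖ * (p1R ^ 2 + p1I ^ 2) / (4 * p1R) * t) ^ 2))
        ∘ fun y : ℝ => Real.exp (p₁ * y + s / p₁).re := by
    funext y
    rw [hf, hg, hη₁, norm_neg_mul_exp_div_neg_one_sub_mul_exp_add_conj, hnorm, hre,
      Function.comp_apply]
  have hamplitude :
      ‖α₁‖ / (2 * (‖α₁‖ * (p1R ^ 2 + p1I ^ 2) / (4 * p1R))) = 2 * p1R / (p1R ^ 2 + p1I ^ 2) := by
    field_simp [norm_ne_zero_iff.mpr hα]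
    ring
  rw [hratio, Set.range_comp, range_exp_re_mul_ofReal_add (hre ▸ hp.ne'), ← hamplitude]
  exact (isGreatest_image_mul_div_one_add_sq (norm_nonneg α₁) hb).isLUB
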